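/- The vector field X(ξ,x) = (0, 1, S(ξ,x)) with S(ξ,x) = Σ_{n=1}^∞ κ^n Φ'(B_2^n(ξ,x)), κ = 1/(2γ), satisfies DF(ξ,x,y) X(ξ,x) = (1/2) X(B(ξ,x)) at all points of differentiability; i.e. X spans the stable direction with Lyapunov exponent 1/2. -/

import Mathlib

open Set

noncomputable section

/-- Distance to the nearest integer. -/
def Phi (y : ℝ) : ℝ := |y - round y|

/-- The baker transformation on the unit square. -/
def bak (p : ℝ × ℝ) : ℝ × ℝ :=
  (Int.fract (2 * p.1), ((⌊2 * p.1⌋ : ℝ) + p.2) / 2)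

/-- The derivative of `Phi` (off the half-integers). -/
def Phi' (y : ℝ) : ℝ := if Int.fract y ≤ 1 / 2 then 1 else -1

/-- The stable-manifold function `S(ξ,x) = Σ_{n≥1} κ^n Φ'(B₂ⁿ(ξ,x))`. -/
def Sman (κ : ℝ) (ξ x : ℝ) : ℝ := ∑' n : ℕ, κ ^ (n + 1) * Phi' ((bak^[n + 1] (ξ, x)).2)

/-- The Jacobian of `F` applied to a tangent vector. -/
def DFapp (γ : ℝ) (ξ x : ℝ) (v : ℝ × ℝ × ℝ) : ℝ × ℝ × ℝ :=
  (2 * v.1, v.2.1 / 2, -(1/2) * Phi' ((bak (ξ, x)).2) * v.2.1 + γ * v.2.2)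

/-- The invariant stable vector field `X(ξ,x) = (0, 1, S(ξ,x))`. -/
def Xvec (κ : ℝ) (ξ x : ℝ) : ℝ × ℝ × ℝ := (0, 1, Sman κ ξ x)

/-! Shifting the geometric series that defines `S` gives `S = κ (Φ' ∘ B₂ + S ∘ B)`. Since
`γ κ = 1/2`, the third component `-Φ' ∘ B₂ / 2 + γ S` of `DF X` is then `S ∘ B / 2`, while the
first two components are plain arithmetic. -/

lemma abs_Phi' (y : ℝ) : |Phi' y| = 1 := by
  unfold Phi'; split_ifs <;> simp

lemma summable_pow_succ_mul_of_abs_le {κ C : ℝ} (hκ : |κ| < 1) {u : ℕ → ℝ}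
    (hu : ∀ n, |u n| ≤ C) : Summable fun n => κ ^ (n + 1) * u n := by
  refine Summable.of_norm_bounded
    (((summable_geometric_of_lt_one (abs_nonneg κ) hκ).mul_left |κ|).mul_right C) fun n => ?_
  rw [Real.norm_eq_abs, abs_mul, abs_pow, pow_succ']
  exact mul_le_mul_of_nonneg_left (hu n) (by positivity)

lemma Sman_eq_mul_add_Sman_bak {κ : ℝ} (hκ : |κ| < 1) (ξ x : ℝ) :
    Sman κ ξ x = κ * (Phi' (bak (ξ, x)).2 + Sman κ (bak (ξ, x)).1 (bak (ξ, x)).2) := by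
  have hs := summable_pow_succ_mul_of_abs_le hκ (u := fun n => Phi' (bak^[n + 1] (ξ, x)).2)
    fun n => (abs_Phi' _).le
  unfold Sman
  rw [hs.tsum_eq_zero_add, mul_add, ← tsum_mul_left]
  congr 1
  · simp
  · refine tsum_congr fun n => ?_
    rw [Function.iterate_succ_apply, pow_succ']
    ring

theorem DFapp_Xvec_eq_half_smul_Xvec_bak {γ : ℝ} (hγ : 1 / 2 < |γ|) (ξ x : ℝ) :
    DFapp γ ξ x (Xvec (1 / (2 * γ)) ξ x)
      = (1 / 2 : ℝ) • Xvec (1 / (2 * γ)) (bak (ξ, x)).1 (bak (ξ, x)).2 := by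
  have hγ0 : γ ≠ 0 := abs_pos.mp (by linarith)
  have hκ : |1 / (2 * γ)| < 1 := by
    rw [abs_div, abs_mul, abs_two, abs_one, div_lt_one (by positivity)]
    linarith
  have hS := Sman_eq_mul_add_Sman_bak hκ ξ x
  simp only [DFapp, Xvec, Prod.smul_mk, smul_eq_mul, Prod.mk.injEq]
  refine ⟨by ring, by ring, ?_⟩
  rw [hS]
  field_simp
  ring

/-- `DF(ξ,x,y) X(ξ,x) = (1/2) X(B(ξ,x))`: `X` spans the stable direction with
Lyapunov exponent `1/2`. -/
theorem stmt6 (γ : ℝ) (hγ : γ ∈ Set.Ioo (1/2 : ℝ) 1) :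
    ∀ ξ ∈ Set.Icc (0:ℝ) 1, ∀ x ∈ Set.Icc (0:ℝ) 1,
      DFapp γ ξ x (Xvec (1 / (2 * γ)) ξ x)
        = (1/2 : ℝ) • Xvec (1 / (2 * γ)) (bak (ξ, x)).1 (bak (ξ, x)).2 := by
  intro ξ _ x _
  exact DFapp_Xvec_eq_half_smul_Xvec_bak (hγ.1.trans_le (le_abs_self γ)) ξ x
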